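/- Let X be a metric arc and s ≥ 1. Then ‖X‖_{s-var} ≥ max{ℋ^s(X), (diam X)^s}, where ℋ^s denotes the s-dimensional Hausdorff measure on X. -/

import Mathlib

open scoped ENNReal

/-- `f` parametrizes the metric space `X` as an arc: `f` is a continuous injection
of the compact interval `[0,1]` onto `X` (equivalently, a homeomorphism from `[0,1]`
onto `X`). -/
def IsArcParam {X : Type*} [MetricSpace X] (f : ℝ → X) : Prop :=
  ContinuousOn f (Set.Icc 0 1) ∧ Set.InjOn f (Set.Icc 0 1) ∧ f '' Set.Icc 0 1 = Set.univ

/-- `X` is a metric arc: there is a homeomorphism from `[0,1]` onto `X`. -/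
def IsMetricArc (X : Type*) [MetricSpace X] : Prop :=
  ∃ f : ℝ → X, IsArcParam f

/-- `A` is a subarc of the metric arc `X`: the image of a closed subinterval of `[0,1]`
under a homeomorphism from `[0,1]` onto `X`. -/
def IsSubarc {X : Type*} [MetricSpace X] (A : Set X) : Prop :=
  ∃ (f : ℝ → X) (a b : ℝ), IsArcParam f ∧ 0 ≤ a ∧ a ≤ b ∧ b ≤ 1 ∧ A = f '' Set.Icc a b

/-- The interior of a subarc `A`, described intrinsically: the points of `A` whose
removal disconnects `A`.  For `A = f '' [a,b]` (with `a < b`) this is exactly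
`f '' (a,b)`, i.e. `A` without its two endpoints. -/
def arcInterior {X : Type*} [MetricSpace X] (A : Set X) : Set X :=
  {x | x ∈ A ∧ ¬ IsPreconnected (A \ {x})}

/-- A partition of the metric arc `X`: a finite collection of subarcs with pairwise
disjoint interiors whose union is `X`. -/
def IsArcPartition {X : Type*} [MetricSpace X] (P : Finset (Set X)) : Prop :=
  (∀ A ∈ P, IsSubarc A) ∧
    ((P : Set (Set X)).Pairwise fun A B => Disjoint (arcInterior A) (arcInterior B)) ∧
    ⋃₀ (P : Set (Set X)) = Set.univ

/-- The `s`-variation `‖X‖_{s-var}` of `X`: the supremum over all partitions of `X`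
of the sums `∑ (diam A)^s`. -/
noncomputable def sVariation (X : Type*) [MetricSpace X] (s : ℝ) : ℝ≥0∞ :=
  ⨆ (P : Finset (Set X)) (_ : IsArcPartition P), ∑ A ∈ P, EMetric.diam A ^ s

/-- `H_{1/s}(X)`: the infimum of all `H` for which there is a surjection
`f : [0,1] → X` with `edist (f x) (f y) ≤ H * (edist x y)^(1/s)`; it equals `∞`
if no such surjection exists. -/
noncomputable def holderConstant (X : Type*) [MetricSpace X] (s : ℝ) : ℝ≥0∞ :=
  sInf {H : ℝ≥0∞ | ∃ f : ℝ → X, f '' Set.Icc 0 1 = Set.univ ∧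
    ∀ x ∈ Set.Icc (0:ℝ) 1, ∀ y ∈ Set.Icc (0:ℝ) 1, edist (f x) (f y) ≤ H * edist x y ^ (1 / s)}

/-!
Cutting the parameter interval `[0, 1]` into `N` equal pieces gives arc partitions of `X`.
By uniform continuity of the parametrization, the diameters of their pieces tend to `0`
uniformly, so the `s`-sums of these partitions, each at most `‖X‖_{s-var}`, bound `ℋ^s(X)` from
above in the limit. The one-piece partition `{X}` gives `(diam X)^s ≤ ‖X‖_{s-var}`.
-/

open Set Filter Topology Metric MeasureTheory

noncomputable def uniformInterval (N k : ℕ) : Set ℝ :=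
  Icc (k / N) ((k + 1) / N)

lemma uniformInterval_endpoints {N k : ℕ} (hk : k < N) :
    0 ≤ (k / N : ℝ) ∧ (k / N : ℝ) ≤ (k + 1) / N ∧ ((k : ℝ) + 1) / N ≤ 1 := by
  have hN : (0 : ℝ) < N := by exact_mod_cast Nat.zero_lt_of_lt hk
  have hk' : (k : ℝ) + 1 ≤ N := by exact_mod_cast hk
  exact ⟨by positivity, by gcongr; linarith, (div_le_one hN).2 hk'⟩

lemma uniformInterval_subset_unitInterval {N k : ℕ} (hk : k < N) :
    uniformInterval N k ⊆ Icc 0 1 :=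
  Icc_subset_Icc (uniformInterval_endpoints hk).1 (uniformInterval_endpoints hk).2.2

lemma unitInterval_subset_iUnion_uniformInterval {N : ℕ} (hN : 0 < N) :
    Icc (0 : ℝ) 1 ⊆ ⋃ k : Fin N, uniformInterval N k := by
  intro x hx
  have hN' : (0 : ℝ) < N := by exact_mod_cast hN
  have hy : 0 ≤ x * N := mul_nonneg hx.1 hN'.le
  suffices ∃ k < N, x ∈ uniformInterval N k by
    obtain ⟨k, hk, hxk⟩ := this
    exact mem_iUnion.2 ⟨⟨k, hk⟩, hxk⟩
  -- `⌊x * N⌋₊ = N` at `x = 1`, hence the `min`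
  set k := min ⌊x * N⌋₊ (N - 1)
  refine ⟨k, by omega, ?_, ?_⟩
  · rw [div_le_iff₀ hN']
    calc (k : ℝ) ≤ ⌊x * N⌋₊ := by exact_mod_cast min_le_left _ _
      _ ≤ x * N := Nat.floor_le hy
  · rw [le_div_iff₀ hN']
    rcases le_total ⌊x * N⌋₊ (N - 1) with h | h
    · rw [show k = ⌊x * N⌋₊ from min_eq_left h]
      exact (Nat.lt_floor_add_one _).le
    · have : ((N - 1 : ℕ) : ℝ) + 1 = N := by rw [Nat.cast_pred hN]; ring
      rw [show k = N - 1 from min_eq_right h, this]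
      nlinarith [hx.2]

lemma disjoint_Ioo_natCast_div_of_ne {N j k : ℕ} (hjk : j ≠ k) :
    Disjoint (Ioo (j / N : ℝ) ((j + 1) / N)) (Ioo (k / N : ℝ) ((k + 1) / N)) := by
  wlog hlt : j < k generalizing j k
  · exact (this hjk.symm (by omega)).symm
  have : ((j : ℝ) + 1) / N ≤ k / N := by gcongr; exact_mod_cast hlt
  exact disjoint_left.2 fun x hj hk => (hk.1.trans hj.2).not_ge this

lemma edist_le_of_mem_uniformInterval {N k : ℕ} {u v : ℝ} (hu : u ∈ uniformInterval N k)
    (hv : v ∈ uniformInterval N k) : edist u v ≤ ENNReal.ofReal (1 / N) := by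
  refine edist_le_ofReal (by positivity) |>.2 ((Real.dist_le_of_mem_Icc hu hv).trans_eq ?_)
  ring

section Arc

variable {X : Type*} [MetricSpace X]

lemma arcInterior_image_Icc_subset {f : ℝ → X} {a b : ℝ} (hc : ContinuousOn f (Icc a b))
    (hi : InjOn f (Icc a b)) : arcInterior (f '' Icc a b) ⊆ f '' Ioo a b := by
  rintro _ ⟨⟨t, ht, rfl⟩, hdisc⟩
  refine ⟨t, ⟨ht.1.lt_of_ne ?_, ht.2.lt_of_ne ?_⟩, rfl⟩ <;> rintro rfl <;> apply hdisc
  · rw [← image_singleton, ← hi.image_sdiff_subset (singleton_subset_iff.2 ht), Icc_sdiff_left]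
    exact isPreconnected_Ioc.image f (hc.mono Ioc_subset_Icc_self)
  · rw [← image_singleton, ← hi.image_sdiff_subset (singleton_subset_iff.2 ht), Icc_sdiff_right]
    exact isPreconnected_Ico.image f (hc.mono Ico_subset_Icc_self)

lemma sum_ediam_pow_le_sVariation {P : Finset (Set X)} (hP : IsArcPartition P) (s : ℝ) :
    ∑ A ∈ P, ediam A ^ s ≤ sVariation X s :=
  le_iSup₂ (f := fun P (_ : IsArcPartition P) => ∑ A ∈ P, ediam A ^ s) P hP

lemma IsMetricArc.ediam_univ_pow_le_sVariation (hX : IsMetricArc X) (s : ℝ) :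
    ediam (univ : Set X) ^ s ≤ sVariation X s := by
  obtain ⟨f, hf⟩ := hX
  have hP : IsArcPartition ({univ} : Finset (Set X)) :=
    ⟨by simpa using ⟨f, 0, 1, hf, le_rfl, zero_le_one, le_rfl, hf.2.2.symm⟩, by simp, by simp⟩
  simpa using sum_ediam_pow_le_sVariation hP s

namespace IsArcParam

variable {f : ℝ → X}

lemma iUnion_image_uniformInterval (hf : IsArcParam f) {N : ℕ} (hN : 0 < N) :
    ⋃ k : Fin N, f '' uniformInterval N k = univ := by
  refine eq_univ_of_univ_subset ?_
  rw [← hf.2.2, ← image_iUnion]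
  exact image_mono (unitInterval_subset_iUnion_uniformInterval hN)

lemma injective_image_uniformInterval (hf : IsArcParam f) {N : ℕ} :
    Function.Injective fun k : Fin N => f '' uniformInterval N k := by
  intro j k h
  obtain ⟨-, hj, -⟩ := uniformInterval_endpoints j.2
  have hN : (N : ℝ) ≠ 0 := by exact_mod_cast (Nat.zero_lt_of_lt j.2).ne'
  have hIcc := (hf.2.1.image_eq_image_iff (uniformInterval_subset_unitInterval j.2)
    (uniformInterval_subset_unitInterval k.2)).1 h
  have hleft := ((Icc_eq_Icc_iff hj).1 hIcc).1
  rw [div_left_inj' hN, Nat.cast_inj] at hleft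
  exact Fin.ext hleft

lemma isArcPartition_image_uniformInterval (hf : IsArcParam f) {N : ℕ} (hN : 0 < N) :
    IsArcPartition (Finset.univ.image fun k : Fin N => f '' uniformInterval N k) := by
  simp only [IsArcPartition, Finset.coe_image, Finset.coe_univ, image_univ, Finset.mem_image,
    Finset.mem_univ, true_and, forall_exists_index, forall_apply_eq_imp_iff, sUnion_range]
  refine ⟨fun k => ?_, ?_, hf.iUnion_image_uniformInterval hN⟩
  · obtain ⟨h0, hk, h1⟩ := uniformInterval_endpoints k.2
    exact ⟨f, _, _, hf, h0, hk, h1, rfl⟩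
  · rintro _ ⟨j, rfl⟩ _ ⟨k, rfl⟩ hjk
    have hsub (i : Fin N) : uniformInterval N i ⊆ Icc 0 1 := uniformInterval_subset_unitInterval i.2
    have hinterior (i : Fin N) := arcInterior_image_Icc_subset (hf.1.mono (hsub i))
      (hf.2.1.mono (hsub i))
    refine .mono (hinterior j) (hinterior k) (.image (disjoint_Ioo_natCast_div_of_ne ?_) hf.2.1
      (Ioo_subset_Icc_self.trans (hsub j)) (Ioo_subset_Icc_self.trans (hsub k)))
    exact fun h => hjk (by rw [Fin.ext h])

lemma sum_ediam_image_uniformInterval_le_sVariation (hf : IsArcParam f) (N : ℕ) (s : ℝ) :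
    ∑ k : Fin N, ediam (f '' uniformInterval N k) ^ s ≤ sVariation X s := by
  rcases N.eq_zero_or_pos with rfl | hN
  · simp
  have h := sum_ediam_pow_le_sVariation (hf.isArcPartition_image_uniformInterval hN) s
  rwa [Finset.sum_image fun j _ k _ h => hf.injective_image_uniformInterval h] at h

end IsArcParam

lemma tendsto_iSup_ediam_image_uniformInterval {f : ℝ → X} (hf : ContinuousOn f (Icc 0 1)) :
    Tendsto (fun N : ℕ => ⨆ k : Fin N, ediam (f '' uniformInterval N k)) atTop (𝓝 0) := by
  rw [ENNReal.tendsto_nhds_zero]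
  intro ε hε
  obtain ⟨δ, hδ, hfδ⟩ := EMetric.uniformContinuousOn_iff.1
    (isCompact_Icc.uniformContinuousOn_of_continuous hf) ε hε
  have hsmall : ∀ᶠ N : ℕ in atTop, ENNReal.ofReal (1 / N) < δ := by
    have := ENNReal.tendsto_ofReal (tendsto_one_div_atTop_nhds_zero_nat (𝕜 := ℝ))
    rw [ENNReal.ofReal_zero] at this
    exact this.eventually_lt_const hδ
  filter_upwards [hsmall] with N hN
  refine iSup_le fun k => ediam_image_le_iff.2 fun u hu v hv => (hfδ ?_ ?_ ?_).le
  · exact uniformInterval_subset_unitInterval k.2 hu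
  · exact uniformInterval_subset_unitInterval k.2 hv
  · exact (edist_le_of_mem_uniformInterval hu hv).trans_lt hN

lemma IsMetricArc.hausdorffMeasure_univ_le_sVariation [MeasurableSpace X] [BorelSpace X]
    (hX : IsMetricArc X) (s : ℝ) :
    μH[s] (univ : Set X) ≤ sVariation X s := by
  obtain ⟨f, hf⟩ := hX
  calc μH[s] (univ : Set X)
      ≤ liminf (fun N : ℕ => ∑ k : Fin N, ediam (f '' uniformInterval N k) ^ s) atTop := by
        refine Measure.hausdorffMeasure_le_liminf_sum s univ _
          (tendsto_iSup_ediam_image_uniformInterval hf.1) _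
          (.of_forall fun N k => le_iSup (fun k : Fin N => ediam (f '' uniformInterval N k)) k) ?_
        filter_upwards [eventually_gt_atTop 0] with N hN
        exact (hf.iUnion_image_uniformInterval hN).ge
    _ ≤ sVariation X s :=
        liminf_le_of_frequently_le' (.of_forall fun N =>
          hf.sum_ediam_image_uniformInterval_le_sVariation N s)

end Arc

theorem sVariation_ge_max_hausdorff_diam_general (X : Type*) [MetricSpace X]
    [MeasurableSpace X] [BorelSpace X]
    (hX : IsMetricArc X) (s : ℝ) :
    max ((MeasureTheory.Measure.hausdorffMeasure s : MeasureTheory.Measure X) Set.univ)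
        (EMetric.diam (Set.univ : Set X) ^ s)
      ≤ sVariation X s :=
  max_le (hX.hausdorffMeasure_univ_le_sVariation s) (hX.ediam_univ_pow_le_sVariation s)

/-- For a metric arc `X` and `s ≥ 1`,
`‖X‖_{s-var} ≥ max{ℋ^s(X), (diam X)^s}`. -/
theorem sVariation_ge_max_hausdorff_diam (X : Type*) [MetricSpace X]
    [MeasurableSpace X] [BorelSpace X]
    (hX : IsMetricArc X) (s : ℝ) (hs : 1 ≤ s) :
    max ((MeasureTheory.Measure.hausdorffMeasure s : MeasureTheory.Measure X) Set.univ)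
        (EMetric.diam (Set.univ : Set X) ^ s)
      ≤ sVariation X s :=
  sVariation_ge_max_hausdorff_diam_general X hX s
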